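/- If R₁ and R₂ are real rational functions with no common real poles, then the Cauchy index over ℝ of R₁ + R₂ equals the sum of the Cauchy indices of R₁ and R₂ over ℝ. -/

import Mathlib

open Polynomial Filter Topology
open scoped Classical

/-- The function `ℝ → ℝ` determined by a real rational function, evaluated via its
numerator and denominator in lowest terms. -/
noncomputable def evalFn (R : RatFunc ℝ) : ℝ → ℝ :=
  fun x => R.num.eval x / R.denom.eval x

/-- The Cauchy index of `f` at a point `ω`: `+1` if `f(ω−0) < 0 < f(ω+0)` (jump
from `−∞` to `+∞`), `−1` if `f(ω−0) > 0 > f(ω+0)`, and `0` otherwise (in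
particular at poles of even order). -/
noncomputable def indAt (f : ℝ → ℝ) (ω : ℝ) : ℤ :=
  if Tendsto f (𝓝[<] ω) atBot ∧ Tendsto f (𝓝[>] ω) atTop then 1
  else if Tendsto f (𝓝[<] ω) atTop ∧ Tendsto f (𝓝[>] ω) atBot then -1
  else 0

/-- The Cauchy index of a real rational function over `ℝ`: the sum of local
indices over all its real poles (the real roots of its denominator). -/
noncomputable def indR (R : RatFunc ℝ) : ℤ :=
  ∑ ω ∈ R.denom.roots.toFinset, indAt (evalFn R) ω

/-! At a pole `ω` of `R₁`, the other summand `R₂` has no pole, so `R₂` is continuous at `ω`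
and adding a function with a finite limit does not change whether `R₁` tends to `±∞` on
either side. Hence the local indices of `R₁ + R₂` at the poles of `R₁` are those of `R₁`,
symmetrically for `R₂`. The poles of `R₁ + R₂` are exactly the disjoint union of the poles
of `R₁` and of `R₂`, because `denom (x + y) ∣ denom x * denom y` applies both to
`R₁ + R₂` and to `R₁ = (R₁ + R₂) + (-R₂)`. -/

section TendstoAdd

variable {α β : Type*} [TopologicalSpace α] [AddCommGroup α] [LinearOrder α]
  [IsOrderedAddMonoid α] [OrderTopology α] {l : Filter β} {f g : β → α} {c : α}

theorem tendsto_add_atTop_iff_of_tendsto_nhds (hg : Tendsto g l (𝓝 c)) :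
    Tendsto (f + g) l atTop ↔ Tendsto f l atTop :=
  ⟨fun h => by simpa using h.atTop_add hg.neg, fun h => h.atTop_add hg⟩

theorem tendsto_add_atBot_iff_of_tendsto_nhds (hg : Tendsto g l (𝓝 c)) :
    Tendsto (f + g) l atBot ↔ Tendsto f l atBot :=
  ⟨fun h => by simpa using h.atBot_add hg.neg, fun h => h.atBot_add hg⟩

end TendstoAdd

section IndAt

variable {f g : ℝ → ℝ} {ω c : ℝ}

theorem indAt_congr (h : f =ᶠ[𝓝[≠] ω] g) : indAt f ω = indAt g ω := by
  have hlt := h.filter_mono (nhdsLT_le_nhdsNE ω)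
  have hgt := h.filter_mono (nhdsGT_le_nhdsNE ω)
  simp only [indAt, tendsto_congr' hlt, tendsto_congr' hgt]

theorem indAt_add_of_tendsto (hg : Tendsto g (𝓝[≠] ω) (𝓝 c)) :
    indAt (f + g) ω = indAt f ω := by
  have hlt := hg.mono_left (nhdsLT_le_nhdsNE ω)
  have hgt := hg.mono_left (nhdsGT_le_nhdsNE ω)
  simp only [indAt, tendsto_add_atTop_iff_of_tendsto_nhds hlt,
    tendsto_add_atTop_iff_of_tendsto_nhds hgt, tendsto_add_atBot_iff_of_tendsto_nhds hlt,
    tendsto_add_atBot_iff_of_tendsto_nhds hgt]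

end IndAt

theorem Polynomial.eventually_eval_ne_zero_nhdsNE {R : Type*} [CommRing R] [IsDomain R]
    [TopologicalSpace R] [T1Space R] {p : R[X]} (hp : p ≠ 0) (a : R) :
    ∀ᶠ x in 𝓝[≠] a, p.eval x ≠ 0 :=
  nhdsNE_le_cofinite a (finite_setOfPred_isRoot hp).eventually_cofinite_notMem

namespace RatFunc

variable {K : Type*} [Field K]

theorem denom_neg_dvd (x : RatFunc K) : (-x).denom ∣ x.denom := by
  rw [denom_dvd x.denom_ne_zero]
  exact ⟨-x.num, by rw [map_neg, neg_div, num_div_denom]⟩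

theorem isRoot_denom_or_of_isRoot_denom_add {x y : RatFunc K} {a : K}
    (h : (x + y).denom.IsRoot a) : x.denom.IsRoot a ∨ y.denom.IsRoot a := by
  have hdvd : Polynomial.X - Polynomial.C a ∣ x.denom * y.denom := (dvd_iff_isRoot.2 h).trans (denom_add_dvd x y)
  simpa only [dvd_iff_isRoot] using (prime_X_sub_C a).dvd_or_dvd hdvd

theorem isRoot_denom_add_iff_left {x y : RatFunc K} {a : K} (hy : ¬y.denom.IsRoot a) :
    (x + y).denom.IsRoot a ↔ x.denom.IsRoot a := by
  refine ⟨fun h => (isRoot_denom_or_of_isRoot_denom_add h).resolve_right hy, fun h => ?_⟩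
  have hsum : (x + y + -y).denom.IsRoot a := by rwa [add_neg_cancel_right]
  exact (isRoot_denom_or_of_isRoot_denom_add hsum).resolve_right
    fun hneg => hy (hneg.dvd (denom_neg_dvd y))

theorem mem_roots_toFinset_denom {x : RatFunc K} {a : K} :
    a ∈ x.denom.roots.toFinset ↔ x.denom.IsRoot a := by
  rw [Multiset.mem_toFinset, mem_roots x.denom_ne_zero]

theorem roots_toFinset_denom_add {x y : RatFunc K}
    (h : ∀ a, ¬(x.denom.IsRoot a ∧ y.denom.IsRoot a)) :
    (x + y).denom.roots.toFinset = x.denom.roots.toFinset ∪ y.denom.roots.toFinset := by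
  ext a
  simp only [Finset.mem_union, mem_roots_toFinset_denom]
  by_cases hy : y.denom.IsRoot a
  · have hx : ¬x.denom.IsRoot a := fun hx => h a ⟨hx, hy⟩
    rw [add_comm, isRoot_denom_add_iff_left hx]
    exact ⟨Or.inr, fun h' => h'.resolve_left hx⟩
  · rw [isRoot_denom_add_iff_left hy, or_iff_left hy]

end RatFunc

theorem evalFn_add_eventuallyEq (R₁ R₂ : RatFunc ℝ) (ω : ℝ) :
    evalFn (R₁ + R₂) =ᶠ[𝓝[≠] ω] evalFn R₁ + evalFn R₂ := by
  filter_upwards [R₁.denom.eventually_eval_ne_zero_nhdsNE R₁.denom_ne_zero ω,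
    R₂.denom.eventually_eval_ne_zero_nhdsNE R₂.denom_ne_zero ω] with x h₁ h₂
  exact RatFunc.eval_add (RingHom.id ℝ) x h₁ h₂

theorem continuousAt_evalFn {R : RatFunc ℝ} {ω : ℝ} (h : R.denom.eval ω ≠ 0) :
    ContinuousAt (evalFn R) ω :=
  R.num.continuousAt.div R.denom.continuousAt h

theorem indAt_evalFn_add_of_eval_denom_ne_zero {R₁ R₂ : RatFunc ℝ} {ω : ℝ}
    (h : R₂.denom.eval ω ≠ 0) : indAt (evalFn (R₁ + R₂)) ω = indAt (evalFn R₁) ω :=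
  (indAt_congr (evalFn_add_eventuallyEq R₁ R₂ ω)).trans
    (indAt_add_of_tendsto ((continuousAt_evalFn h).tendsto.mono_left nhdsWithin_le_nhds))

theorem stmt19 (R₁ R₂ : RatFunc ℝ)
    (hdisj : ∀ x : ℝ, ¬(R₁.denom.eval x = 0 ∧ R₂.denom.eval x = 0)) :
    indR (R₁ + R₂) = indR R₁ + indR R₂ := by
  have hdisj' : Disjoint R₁.denom.roots.toFinset R₂.denom.roots.toFinset :=
    Finset.disjoint_left.2 fun ω h₁ h₂ =>
      hdisj ω ⟨RatFunc.mem_roots_toFinset_denom.1 h₁, RatFunc.mem_roots_toFinset_denom.1 h₂⟩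
  rw [indR, RatFunc.roots_toFinset_denom_add hdisj, Finset.sum_union hdisj']
  congr 1
  · refine Finset.sum_congr rfl fun ω h₁ => ?_
    exact indAt_evalFn_add_of_eval_denom_ne_zero
      fun h₂ => hdisj ω ⟨RatFunc.mem_roots_toFinset_denom.1 h₁, h₂⟩
  · refine Finset.sum_congr rfl fun ω h₂ => ?_
    rw [add_comm R₁ R₂]
    exact indAt_evalFn_add_of_eval_denom_ne_zero
      fun h₁ => hdisj ω ⟨h₁, RatFunc.mem_roots_toFinset_denom.1 h₂⟩
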